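/- arXiv:1105.5725 — 4 statements merged into one kernel-verified Lean document; each statement's English description precedes it below -/
import Mathlib

section
/- Let X be a set, x ∈ X a point, ι a nonempty index type, Y : ι → X, c : ι → ℝ with c(i) ≥ 0 for all i, and u : X → ℝ. Suppose the family (u(Y i) + c i)_{i ∈ ι} is bounded below and u(x) = inf_{i ∈ ι} ( u(Y i) + c i ). Then 1 − exp(−u(x)) = inf_{i ∈ ι} ( exp(−c i) · (1 − exp(−u(Y i))) + 1 − exp(−c i) ). -/
/-! The map `t ↦ 1 - exp (-t)` is continuous and increasing, so it commutes with the infimum of a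
bounded-below family, and it conjugates the shift `a ↦ a + c` to the affine map
`w ↦ exp (-c) * w + 1 - exp (-c)`. -/

open Real

noncomputable def kruzkov (t : ℝ) : ℝ := 1 - exp (-t)

lemma monotone_kruzkov : Monotone kruzkov := fun _ _ hab =>
  sub_le_sub_left (exp_le_exp.mpr (neg_le_neg hab)) 1

lemma continuous_kruzkov : Continuous kruzkov := by
  unfold kruzkov; fun_prop

lemma kruzkov_add (a c : ℝ) : kruzkov (a + c) = exp (-c) * kruzkov a + 1 - exp (-c) := by
  simp only [kruzkov, neg_add, exp_add]
  ring

theorem kruzkov_bellman_general {X : Type*} {ι : Type*} [Nonempty ι] (x : X)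
    (Y : ι → X) (c : ι → ℝ) (u : X → ℝ)
    (hbdd : BddBelow (Set.range fun i => u (Y i) + c i))
    (hu : u x = ⨅ i, (u (Y i) + c i)) :
    1 - Real.exp (-(u x)) =
      ⨅ i, (Real.exp (-(c i)) * (1 - Real.exp (-(u (Y i)))) + 1 - Real.exp (-(c i))) := by
  calc kruzkov (u x) = kruzkov (⨅ i, (u (Y i) + c i)) := by rw [hu]
    _ = ⨅ i, kruzkov (u (Y i) + c i) :=
      monotone_kruzkov.map_ciInf_of_continuousAt continuous_kruzkov.continuousAt hbdd
    _ = _ := by simp only [kruzkov_add]; rfl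

/-- Kruzkov-transform identity for Bellman-type equations:
if `u x = ⨅ i, (u (Y i) + c i)` with `c i ≥ 0` and the family bounded below, then
`1 - exp (-(u x)) = ⨅ i, (exp (-(c i)) * (1 - exp (-(u (Y i)))) + 1 - exp (-(c i)))`. -/
theorem kruzkov_bellman {X : Type*} {ι : Type*} [Nonempty ι] (x : X)
    (Y : ι → X) (c : ι → ℝ) (hc : ∀ i, 0 ≤ c i) (u : X → ℝ)
    (hbdd : BddBelow (Set.range fun i => u (Y i) + c i))
    (hu : u x = ⨅ i, (u (Y i) + c i)) :
    1 - Real.exp (-(u x)) =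
      ⨅ i, (Real.exp (-(c i)) * (1 - Real.exp (-(u (Y i)))) + 1 - Real.exp (-(c i))) :=
  kruzkov_bellman_general x Y c u hbdd hu
end

section
/- In the abstract chain setting, for every point x ∈ X with x ∉ B, the set {y : R x y} is nonempty and the value function satisfies the dynamic programming principle V(x) = inf_{y : R x y} ( c(x,y) + V(y) ). -/
/-- The set of total costs of admissible chains from `x`: finite sequences
`x = p 0, p 1, ..., p M` with `R (p m) (p (m+1))` for `m < M` and `p M ∈ B`,
with total cost `∑_{m<M} c (p m) (p (m+1)) + g (p M)`. -/
def chainCosts {X : Type*} (R : X → X → Prop) (B : Set X) (c : X → X → ℝ)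
    (g : X → ℝ) (x : X) : Set ℝ :=
  {r | ∃ (M : ℕ) (p : ℕ → X), p 0 = x ∧ (∀ m < M, R (p m) (p (m + 1))) ∧ p M ∈ B ∧
    r = (∑ m ∈ Finset.range M, c (p m) (p (m + 1))) + g (p M)}

/-!
Every admissible chain from `x ∉ B` makes at least one step, so it splits into a first step
`x → y` followed by an admissible chain from `y`; conversely any step `x → y` can be prepended
to a chain from `y`. Hence the costs from `x` are exactly the translates `c x y + r` of the costs
`r` from the successors `y`, and taking infima (all cost sets are bounded below because `c ≥ 0`
and `g` is bounded below) gives the dynamic programming principle.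
-/

section ChainCosts

variable {X : Type*} {R : X → X → Prop} {B : Set X} {c : X → X → ℝ} {g : X → ℝ}

theorem mem_lowerBounds_chainCosts (hc : ∀ x y, 0 ≤ c x y) {b : ℝ}
    (hb : b ∈ lowerBounds (Set.range g)) (x : X) :
    b ∈ lowerBounds (chainCosts R B c g x) := by
  rintro _ ⟨M, p, -, -, -, rfl⟩
  have hsum : 0 ≤ ∑ m ∈ Finset.range M, c (p m) (p (m + 1)) :=
    Finset.sum_nonneg fun m _ => hc _ _
  linarith [hb ⟨p M, rfl⟩]

theorem bddBelow_chainCosts (hc : ∀ x y, 0 ≤ c x y) (hg : BddBelow (Set.range g)) (x : X) :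
    BddBelow (chainCosts R B c g x) :=
  let ⟨_, hb⟩ := hg
  ⟨_, mem_lowerBounds_chainCosts hc hb x⟩

theorem le_sInf_chainCosts (hc : ∀ x y, 0 ≤ c x y) {b : ℝ}
    (hb : b ∈ lowerBounds (Set.range g)) {x : X} (hx : (chainCosts R B c g x).Nonempty) :
    b ≤ sInf (chainCosts R B c g x) :=
  le_csInf hx (mem_lowerBounds_chainCosts hc hb x)

theorem add_mem_chainCosts {x y : X} {r : ℝ} (hxy : R x y) (hr : r ∈ chainCosts R B c g y) :
    c x y + r ∈ chainCosts R B c g x := by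
  obtain ⟨M, p, rfl, hstep, hpB, rfl⟩ := hr
  let q : ℕ → X := fun
    | 0 => x
    | n + 1 => p n
  refine ⟨M + 1, q, rfl, ?_, hpB, ?_⟩
  · rintro (_ | m) hm
    exacts [hxy, hstep m (by omega)]
  · rw [Finset.sum_range_succ' (fun m => c (q m) (q (m + 1)))]
    ring

theorem exists_add_eq_of_mem_chainCosts {x : X} (hx : x ∉ B) {r : ℝ}
    (hr : r ∈ chainCosts R B c g x) :
    ∃ y, R x y ∧ ∃ r' ∈ chainCosts R B c g y, r = c x y + r' := by
  obtain ⟨_ | M, p, rfl, hstep, hpB, rfl⟩ := hr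
  · exact absurd hpB hx
  refine ⟨p 1, hstep 0 M.succ_pos, _,
    ⟨M, fun n => p (n + 1), rfl, fun m hm => hstep (m + 1) (by omega), hpB, rfl⟩, ?_⟩
  rw [Finset.sum_range_succ']
  ring

theorem sInf_chainCosts_le_add (hc : ∀ x y, 0 ≤ c x y) (hg : BddBelow (Set.range g))
    {x y : X} (hxy : R x y) (hy : (chainCosts R B c g y).Nonempty) :
    sInf (chainCosts R B c g x) ≤ c x y + sInf (chainCosts R B c g y) := by
  rw [← OrderIso.addLeft_apply (c x y),
    OrderIso.map_csInf' _ hy (bddBelow_chainCosts hc hg y)]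
  refine csInf_le_csInf (bddBelow_chainCosts hc hg x) (hy.image _) ?_
  rintro _ ⟨r, hr, rfl⟩
  exact add_mem_chainCosts hxy hr

end ChainCosts

theorem value_dpp_general {X : Type*} (R : X → X → Prop) (B : Set X)
    (c : X → X → ℝ) (g : X → ℝ) (hc : ∀ x y, 0 ≤ c x y)
    (hg : BddBelow (Set.range g))
    (hchain : ∀ x, (chainCosts R B c g x).Nonempty)
    (V : X → ℝ) (hV : ∀ x, V x = sInf (chainCosts R B c g x))
    (x : X) (hx : x ∉ B) :
    {y | R x y}.Nonempty ∧ V x = sInf ((fun y => c x y + V y) '' {y | R x y}) := by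
  obtain rfl : V = fun z => sInf (chainCosts R B c g z) := funext hV
  obtain ⟨b, hb⟩ := hg
  obtain ⟨y, hxy, -⟩ := exists_add_eq_of_mem_chainCosts hx (hchain x).some_mem
  refine ⟨⟨y, hxy⟩, le_antisymm ?_ ?_⟩
  · refine le_csInf ⟨_, y, hxy, rfl⟩ ?_
    rintro _ ⟨z, hxz, rfl⟩
    exact sInf_chainCosts_le_add hc ⟨b, hb⟩ hxz (hchain z)
  · refine le_csInf (hchain x) fun r hr => ?_
    obtain ⟨z, hxz, r', hr', rfl⟩ := exists_add_eq_of_mem_chainCosts hx hr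
    have himage_bdd : BddBelow ((fun y => c x y + sInf (chainCosts R B c g y)) '' {y | R x y}) := by
      refine ⟨b, ?_⟩
      rintro _ ⟨w, -, rfl⟩
      linarith [hc x w, le_sInf_chainCosts hc hb (hchain w)]
    calc _ ≤ c x z + sInf (chainCosts R B c g z) := csInf_le himage_bdd ⟨z, hxz, rfl⟩
      _ ≤ c x z + r' := by gcongr; exact csInf_le (bddBelow_chainCosts hc ⟨b, hb⟩ z) hr'

/-- Dynamic programming principle: at every point `x ∉ B`, the set of successors
`{y | R x y}` is nonempty and `V x = inf_{y : R x y} (c x y + V y)`. -/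
theorem value_dpp {X : Type*} [Nonempty X] (R : X → X → Prop) (B : Set X)
    (c : X → X → ℝ) (g : X → ℝ) (hc : ∀ x y, 0 ≤ c x y)
    (hg : BddBelow (Set.range g))
    (hchain : ∀ x, (chainCosts R B c g x).Nonempty)
    (V : X → ℝ) (hV : ∀ x, V x = sInf (chainCosts R B c g x))
    (x : X) (hx : x ∉ B) :
    {y | R x y}.Nonempty ∧ V x = sInf ((fun y => c x y + V y) '' {y | R x y}) :=
  value_dpp_general R B c g hc hg hchain V hV x hx
end

section
/- In the single-edge semi-discrete setting, for every h > 0 the value function u_h is Lipschitz continuous on [0,l] with a constant independent of h: for all x₁, x₂ ∈ [0,l], |u_h(x₁) − u_h(x₂)| ≤ ( sup_{s ∈ [0,l]} f(s) ) · |x₁ − x₂|. -/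
/-- The set of costs of admissible discrete paths from `x` on the edge `[0, l]`:
finite sequences `x = t 0, t 1, ..., t M` in `[0, l]` with steps of length at most `h`,
ending at a boundary point `0` or `l`, of cost
`∑_{m<M} f (t m) * |t (m+1) - t m| + g (t M)` with `g 0 = g0`, `g l = gl`. -/
def edgeChainCosts (l h : ℝ) (f : ℝ → ℝ) (g0 gl : ℝ) (x : ℝ) : Set ℝ :=
  {r | ∃ (M : ℕ) (t : ℕ → ℝ), t 0 = x ∧ (∀ m ≤ M, t m ∈ Set.Icc 0 l) ∧
    (∀ m < M, |t (m + 1) - t m| ≤ h) ∧ (t M = 0 ∨ t M = l) ∧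
    r = (∑ m ∈ Finset.range M, f (t m) * |t (m + 1) - t m|) +
      (if t M = 0 then g0 else gl)}

/-!
From `x₁`, walk straight to `x₂` in `⌈|x₁ - x₂| / h⌉₊` equal steps, each of length at
most `h`; this costs at most `(sup f) * |x₁ - x₂|`. Continuing with any admissible chain
from `x₂` gives `u_h x₁ ≤ u_h x₂ + (sup f) * |x₁ - x₂|`, and symmetrically. Since `f ≥ 0`,
every cost is at least `min g₀ g_l`, so the infima are genuine and not the junk value of
`sInf` on a set unbounded below.
-/

open Finset Set

namespace EdgeChain

noncomputable def stepCount (h a b : ℝ) : ℕ := ⌈|b - a| / h⌉₊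

noncomputable def segmentChain (h a b : ℝ) (m : ℕ) : ℝ := a + m / stepCount h a b * (b - a)

variable {h a b : ℝ}

lemma abs_sub_le_stepCount_mul (hh : 0 < h) : |b - a| ≤ stepCount h a b * h :=
  (div_le_iff₀ hh).1 (Nat.le_ceil _)

@[simp]
lemma segmentChain_zero : segmentChain h a b 0 = a := by
  simp [segmentChain]

lemma eq_of_stepCount_eq_zero (hh : 0 < h) (hN : stepCount h a b = 0) : b = a :=
  sub_eq_zero.1 <| abs_nonpos_iff.1 <| by
    simpa [hN] using abs_sub_le_stepCount_mul (a := a) (b := b) hh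

lemma segmentChain_stepCount (hh : 0 < h) : segmentChain h a b (stepCount h a b) = b := by
  rcases eq_or_ne (stepCount h a b) 0 with hN | hN
  · simp [segmentChain, eq_of_stepCount_eq_zero hh hN]
  · simp [segmentChain, hN]

lemma segmentChain_succ_sub (m : ℕ) :
    segmentChain h a b (m + 1) - segmentChain h a b m = (b - a) / stepCount h a b := by
  simp only [segmentChain]
  push_cast
  ring

lemma abs_segmentChain_succ_sub_le (hh : 0 < h) (m : ℕ) :
    |segmentChain h a b (m + 1) - segmentChain h a b m| ≤ h := by
  rw [segmentChain_succ_sub, abs_div, Nat.abs_cast]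
  rcases eq_or_ne (stepCount h a b) 0 with hN | hN
  · simp [hN, hh.le]
  · rw [div_le_iff₀ (by positivity), mul_comm]
    exact abs_sub_le_stepCount_mul hh

lemma sum_abs_segmentChain_succ_sub (hh : 0 < h) :
    ∑ m ∈ range (stepCount h a b), |segmentChain h a b (m + 1) - segmentChain h a b m| =
      |b - a| := by
  simp only [segmentChain_succ_sub, sum_const, card_range, nsmul_eq_mul, abs_div, Nat.abs_cast]
  rcases eq_or_ne (stepCount h a b) 0 with hN | hN
  · simp [eq_of_stepCount_eq_zero hh hN]
  · exact mul_div_cancel₀ _ (by exact_mod_cast hN)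

lemma segmentChain_mem {s : Set ℝ} (hs : Convex ℝ s) (ha : a ∈ s) (hb : b ∈ s) {m : ℕ}
    (hm : m ≤ stepCount h a b) : segmentChain h a b m ∈ s :=
  hs.add_smul_sub_mem ha hb
    ⟨by positivity, div_le_one_of_le₀ (by exact_mod_cast hm) (by positivity)⟩

lemma sum_mul_abs_sub_le_mul_sum {f : ℝ → ℝ} {t : ℕ → ℝ} {N : ℕ} {K : ℝ}
    (hK : ∀ m < N, f (t m) ≤ K) :
    ∑ m ∈ range N, f (t m) * |t (m + 1) - t m| ≤ K * ∑ m ∈ range N, |t (m + 1) - t m| := by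
  rw [mul_sum]
  exact sum_le_sum fun m hm ↦
    mul_le_mul_of_nonneg_right (hK m (mem_range.1 hm)) (abs_nonneg _)

lemma sum_segmentChain_le (hh : 0 < h) {f : ℝ → ℝ} {s : Set ℝ} {K : ℝ} (hs : Convex ℝ s)
    (hK : ∀ x ∈ s, f x ≤ K) (ha : a ∈ s) (hb : b ∈ s) :
    ∑ m ∈ range (stepCount h a b),
        f (segmentChain h a b m) * |segmentChain h a b (m + 1) - segmentChain h a b m| ≤
      K * |b - a| := by
  rw [← sum_abs_segmentChain_succ_sub hh]
  exact sum_mul_abs_sub_le_mul_sum fun m hm ↦ hK _ (segmentChain_mem hs ha hb hm.le)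

section Append

variable {α : Type*} {s t : ℕ → α} {N M : ℕ}

def append (s t : ℕ → α) (N m : ℕ) : α := if m < N then s m else t (m - N)

lemma append_of_le (hst : s N = t 0) {m : ℕ} (hm : m ≤ N) : append s t N m = s m := by
  rcases hm.lt_or_eq with hm | rfl
  · simp [append, hm]
  · simp [append, hst]

lemma append_add (m : ℕ) : append s t N (N + m) = t m := by
  simp [append]

lemma append_mem {S : Set α} (hs : ∀ m ≤ N, s m ∈ S) (ht : ∀ m ≤ M, t m ∈ S) :
    ∀ m ≤ N + M, append s t N m ∈ S := by
  intro m hm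
  rcases lt_or_ge m N with hmN | hNm
  · simpa [append, hmN] using hs m hmN.le
  · simpa [append, hNm.not_gt] using ht (m - N) (by omega)

lemma forall_append_succ (P : α → α → Prop) (hst : s N = t 0)
    (hs : ∀ m < N, P (s m) (s (m + 1))) (ht : ∀ m < M, P (t m) (t (m + 1))) :
    ∀ m < N + M, P (append s t N m) (append s t N (m + 1)) := by
  intro m hm
  rcases lt_or_ge m N with hmN | hNm
  · rw [append_of_le hst hmN.le, append_of_le hst hmN]
    exact hs m hmN
  · obtain ⟨k, rfl⟩ := Nat.exists_eq_add_of_le hNm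
    rw [append_add, add_assoc, append_add]
    exact ht k (by omega)

lemma sum_range_append {β : Type*} [AddCommMonoid β] (F : α → α → β) (hst : s N = t 0) :
    ∑ m ∈ range (N + M), F (append s t N m) (append s t N (m + 1)) =
      ∑ m ∈ range N, F (s m) (s (m + 1)) + ∑ m ∈ range M, F (t m) (t (m + 1)) := by
  rw [sum_range_add]
  congr 1
  · exact sum_congr rfl fun m hm ↦ by
      rw [append_of_le hst (mem_range.1 hm).le, append_of_le hst (mem_range.1 hm)]
  · exact sum_congr rfl fun m _ ↦ by rw [append_add, add_assoc, append_add]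

end Append

end EdgeChain

lemma csInf_le_csInf_add {S T : Set ℝ} (hS : BddBelow S) (hT : T.Nonempty) {c : ℝ}
    (hST : ∀ r ∈ T, ∃ r' ∈ S, r' ≤ r + c) : sInf S ≤ sInf T + c := by
  rw [← sub_le_iff_le_add]
  refine le_csInf hT fun r hr ↦ ?_
  obtain ⟨r', hr', hle⟩ := hST r hr
  exact sub_le_iff_le_add.2 ((csInf_le hS hr').trans hle)

open EdgeChain

section EdgeChainCosts

variable {l h : ℝ} {f : ℝ → ℝ} {g0 gl x y : ℝ}

lemma edgeChainCosts_nonempty (hh : 0 < h) (hx : x ∈ Icc 0 l) :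
    (edgeChainCosts l h f g0 gl x).Nonempty :=
  ⟨_, stepCount h x 0, segmentChain h x 0, segmentChain_zero,
    fun _ hm ↦ segmentChain_mem (convex_Icc 0 l) hx ⟨le_rfl, hx.1.trans hx.2⟩ hm,
    fun m _ ↦ abs_segmentChain_succ_sub_le hh m, Or.inl (segmentChain_stepCount hh), rfl⟩

lemma edgeChainCosts_bddBelow (hf0 : ∀ s ∈ Icc 0 l, 0 ≤ f s) :
    BddBelow (edgeChainCosts l h f g0 gl x) := by
  refine ⟨min g0 gl, ?_⟩
  rintro r ⟨M, t, -, ht, -, -, rfl⟩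
  have hsum : 0 ≤ ∑ m ∈ range M, f (t m) * |t (m + 1) - t m| :=
    sum_nonneg fun m hm ↦ mul_nonneg (hf0 _ (ht m (mem_range.1 hm).le)) (abs_nonneg _)
  have hg : min g0 gl ≤ if t M = 0 then g0 else gl := by
    split_ifs
    exacts [min_le_left _ _, min_le_right _ _]
  linarith

lemma exists_mem_edgeChainCosts_le_add (hh : 0 < h) {K : ℝ} (hK : ∀ s ∈ Icc 0 l, f s ≤ K)
    (hx : x ∈ Icc 0 l) {r : ℝ} (hr : r ∈ edgeChainCosts l h f g0 gl y) :
    ∃ r' ∈ edgeChainCosts l h f g0 gl x, r' ≤ r + K * |x - y| := by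
  obtain ⟨M, t, rfl, ht, hstep, hend, rfl⟩ := hr
  have hst : segmentChain h x (t 0) (stepCount h x (t 0)) = t 0 := segmentChain_stepCount hh
  have ht0 : t 0 ∈ Icc 0 l := ht 0 M.zero_le
  refine ⟨_, ⟨stepCount h x (t 0) + M, append (segmentChain h x (t 0)) t (stepCount h x (t 0)),
    (append_of_le hst (Nat.zero_le _)).trans segmentChain_zero,
    append_mem (fun _ hm ↦ segmentChain_mem (convex_Icc 0 l) hx ht0 hm) ht,
    forall_append_succ (fun a b ↦ |b - a| ≤ h) hst
      (fun m _ ↦ abs_segmentChain_succ_sub_le hh m) hstep, by rwa [append_add], rfl⟩, ?_⟩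
  rw [append_add, sum_range_append (fun a b ↦ f a * |b - a|) hst, abs_sub_comm]
  linarith [sum_segmentChain_le hh (convex_Icc 0 l) hK hx ht0]

lemma sInf_edgeChainCosts_le_add (hh : 0 < h) (hf0 : ∀ s ∈ Icc 0 l, 0 ≤ f s) {K : ℝ}
    (hK : ∀ s ∈ Icc 0 l, f s ≤ K) (hx : x ∈ Icc 0 l) (hy : y ∈ Icc 0 l) :
    sInf (edgeChainCosts l h f g0 gl x) ≤ sInf (edgeChainCosts l h f g0 gl y) + K * |x - y| :=
  csInf_le_csInf_add (edgeChainCosts_bddBelow hf0) (edgeChainCosts_nonempty hh hy)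
    fun _ hr ↦ exists_mem_edgeChainCosts_le_add hh hK hx hr

end EdgeChainCosts

theorem edge_value_lipschitz_general (l h η : ℝ) (hh : 0 < h)
    (f : ℝ → ℝ) (hf : Continuous f) (hη : 0 < η) (hfη : ∀ s ∈ Set.Icc 0 l, η ≤ f s)
    (g0 gl : ℝ) (x₁ x₂ : ℝ) (hx₁ : x₁ ∈ Set.Icc 0 l) (hx₂ : x₂ ∈ Set.Icc 0 l) :
    |sInf (edgeChainCosts l h f g0 gl x₁) - sInf (edgeChainCosts l h f g0 gl x₂)| ≤
      sSup (f '' Set.Icc 0 l) * |x₁ - x₂| := by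
  have hf0 : ∀ s ∈ Icc 0 l, 0 ≤ f s := fun s hs ↦ hη.le.trans (hfη s hs)
  have hK : ∀ s ∈ Icc 0 l, f s ≤ sSup (f '' Icc 0 l) :=
    fun s hs ↦ le_csSup (isCompact_Icc.image hf).bddAbove (mem_image_of_mem f hs)
  have h₁₂ := sInf_edgeChainCosts_le_add (g0 := g0) (gl := gl) hh hf0 hK hx₁ hx₂
  have h₂₁ := sInf_edgeChainCosts_le_add (g0 := g0) (gl := gl) hh hf0 hK hx₂ hx₁
  rw [abs_sub_comm x₂] at h₂₁
  exact abs_sub_le_iff.2 ⟨by linarith, by linarith⟩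

/-- Uniform-in-`h` Lipschitz estimate for the single-edge semi-discrete value function:
`|u_h x₁ - u_h x₂| ≤ (sup_{[0,l]} f) * |x₁ - x₂|`. -/
theorem edge_value_lipschitz (l h η : ℝ) (hl : 0 < l) (hh : 0 < h)
    (f : ℝ → ℝ) (hf : Continuous f) (hη : 0 < η) (hfη : ∀ s ∈ Set.Icc 0 l, η ≤ f s)
    (g0 gl : ℝ) (x₁ x₂ : ℝ) (hx₁ : x₁ ∈ Set.Icc 0 l) (hx₂ : x₂ ∈ Set.Icc 0 l) :
    |sInf (edgeChainCosts l h f g0 gl x₁) - sInf (edgeChainCosts l h f g0 gl x₂)| ≤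
      sSup (f '' Set.Icc 0 l) * |x₁ - x₂| :=
  edge_value_lipschitz_general l h η hh f hf hη hfη g0 gl x₁ x₂ hx₁ hx₂
end

section
/- In the single-edge semi-discrete setting, assume in addition the compatibility condition |g₀ − g_l| ≤ ∫₀ˡ f(s) ds. Then, as h → 0⁺, the value functions u_h converge uniformly on [0,l] to the function u(x) = min( g₀ + ∫₀ˣ f(s) ds , g_l + ∫ₓˡ f(s) ds ). -/
open Filter Topology

open Set MeasureTheory

theorem intervalIntegral_nonneg_of_mem_Icc {f : ℝ → ℝ} {p q a b : ℝ}
    (hf0 : ∀ s ∈ Icc p q, 0 ≤ f s) (ha : a ∈ Icc p q) (hb : b ∈ Icc p q) (hab : a ≤ b) :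
    0 ≤ ∫ s in a..b, f s :=
  intervalIntegral.integral_nonneg hab fun s hs => hf0 s ⟨ha.1.trans hs.1, hs.2.trans hb.2⟩

theorem abs_integral_le_integral_of_mem_Icc {f : ℝ → ℝ} {p q a b : ℝ}
    (hf : IntervalIntegrable f volume p q) (hf0 : ∀ s ∈ Icc p q, 0 ≤ f s)
    (ha : a ∈ Icc p q) (hb : b ∈ Icc p q) :
    |∫ s in a..b, f s| ≤ ∫ s in p..q, f s := by
  wlog hab : a ≤ b generalizing a b
  · rw [intervalIntegral.integral_symm, abs_neg]
    exact this hb ha (le_of_not_ge hab)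
  rw [abs_of_nonneg (intervalIntegral_nonneg_of_mem_Icc hf0 ha hb hab)]
  exact intervalIntegral.integral_mono_interval ha.1 hab hb.2
    (ae_restrict_of_forall_mem measurableSet_Ioc fun s hs => hf0 s (Ioc_subset_Icc_self hs)) hf

theorem abs_integral_sub_mul_le {f : ℝ → ℝ} {a b c ε : ℝ} (hf : IntervalIntegrable f volume a b)
    (hfc : ∀ s ∈ uIcc a b, |f s - c| ≤ ε) :
    |(∫ s in a..b, f s) - c * (b - a)| ≤ ε * |b - a| := by
  have hconst : c * (b - a) = ∫ _ in a..b, c := by simp [mul_comm]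
  rw [hconst, ← intervalIntegral.integral_sub hf intervalIntegrable_const]
  exact intervalIntegral.norm_integral_le_of_norm_le_const (f := fun s => f s - c)
    fun s hs => hfc s (uIoc_subset_uIcc hs)

theorem abs_sum_mul_sub_integral_le {f : ℝ → ℝ} {ε : ℝ} {t : ℕ → ℝ} {M : ℕ}
    (hf : ∀ m < M, IntervalIntegrable f volume (t m) (t (m + 1)))
    (hosc : ∀ m < M, ∀ s ∈ uIcc (t m) (t (m + 1)), |f s - f (t m)| ≤ ε) :
    |(∑ m ∈ Finset.range M, f (t m) * (t (m + 1) - t m)) - ∫ s in t 0..t M, f s| ≤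
      ε * ∑ m ∈ Finset.range M, |t (m + 1) - t m| := by
  rw [← intervalIntegral.sum_integral_adjacent_intervals hf, ← Finset.sum_sub_distrib,
    Finset.mul_sum]
  refine (Finset.abs_sum_le_sum_abs _ _).trans (Finset.sum_le_sum fun m hm => ?_)
  rw [abs_sub_comm]
  exact abs_integral_sub_mul_le (hf m (Finset.mem_range.1 hm)) (hosc m (Finset.mem_range.1 hm))

section Chain

variable {f : ℝ → ℝ} {S : Set ℝ} {h ε : ℝ}

theorem abs_apply_sub_le_of_mem_uIcc (hS : S.OrdConnected)
    (hosc : ∀ s ∈ S, ∀ s' ∈ S, dist s s' ≤ h → dist (f s) (f s') ≤ ε)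
    {a b : ℝ} (ha : a ∈ S) (hb : b ∈ S) (hab : |b - a| ≤ h) :
    ∀ s ∈ uIcc a b, |f s - f a| ≤ ε := fun s hs =>
  hosc s (hS.uIcc_subset ha hb hs) a ha ((abs_sub_left_of_mem_uIcc hs).trans hab)

theorem exists_chain_sum_mul_abs_le (hS : S.OrdConnected) (hf : Continuous f)
    (hf0 : ∀ s ∈ S, 0 ≤ f s) (hosc : ∀ s ∈ S, ∀ s' ∈ S, dist s s' ≤ h → dist (f s) (f s') ≤ ε)
    (hh : 0 < h) {x y : ℝ} (hx : x ∈ S) (hy : y ∈ S) :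
    ∃ (M : ℕ) (t : ℕ → ℝ), t 0 = x ∧ t M = y ∧ (∀ m ≤ M, t m ∈ S) ∧
      (∀ m < M, |t (m + 1) - t m| ≤ h) ∧
      ∑ m ∈ Finset.range M, f (t m) * |t (m + 1) - t m| ≤ |∫ s in x..y, f s| + ε * |y - x| := by
  obtain ⟨N, hN⟩ := exists_nat_gt (|y - x| / h)
  have hN0 : (0 : ℝ) < N := (div_nonneg (abs_nonneg _) hh.le).trans_lt hN
  set d := (y - x) / N
  set t : ℕ → ℝ := fun m => x + m * d
  have ht0 : t 0 = x := by simp [t]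
  have htN : t N = y := by simp only [t, d]; field_simp; ring
  have hstep (m : ℕ) : t (m + 1) - t m = d := by simp only [t]; push_cast; ring
  have hNd : N * |d| = |y - x| := by simp only [d, abs_div, Nat.abs_cast]; field_simp
  have hdh : |d| ≤ h := by
    rw [← hNd, div_lt_iff₀ hh] at hN
    nlinarith [abs_nonneg d]
  have htS (m : ℕ) (hm : m ≤ N) : t m ∈ S := by
    have hmN : (m : ℝ) / N ∈ Icc (0 : ℝ) 1 :=
      ⟨by positivity, (div_le_one hN0).2 (by exact_mod_cast hm)⟩
    simpa [t, d, smul_eq_mul, div_mul_eq_mul_div, mul_div_assoc] using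
      hS.convex.add_smul_sub_mem hx hy hmN
  refine ⟨N, t, ht0, htN, htS, fun m _ => (hstep m).symm ▸ hdh, ?_⟩
  have hriemann := abs_sum_mul_sub_integral_le (M := N) (fun m _ => hf.intervalIntegrable _ _)
    (fun m hm => abs_apply_sub_le_of_mem_uIcc hS hosc (htS m hm.le) (htS (m + 1) hm)
      ((hstep m).symm ▸ hdh))
  simp only [hstep, ht0, htN, ← Finset.sum_mul, Finset.sum_const, Finset.card_range,
    nsmul_eq_mul, hNd] at hriemann ⊢
  have hsum : 0 ≤ ∑ m ∈ Finset.range N, f (t m) :=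
    Finset.sum_nonneg fun m hm => hf0 _ (htS m (Finset.mem_range.1 hm).le)
  calc (∑ m ∈ Finset.range N, f (t m)) * |d| = |(∑ m ∈ Finset.range N, f (t m)) * d| := by
        rw [abs_mul, abs_of_nonneg hsum]
    _ ≤ |∫ s in x..y, f s| + ε * |y - x| := by
        have := abs_sub_abs_le_abs_sub ((∑ m ∈ Finset.range N, f (t m)) * d) (∫ s in x..y, f s)
        linarith

end Chain

section Edge

variable {l h ε η : ℝ} {f : ℝ → ℝ} {g0 gl x : ℝ}

theorem abs_integral_sub_div_le_sum_mul_abs (hf : Continuous f) (hη : 0 < η)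
    (hfη : ∀ s ∈ Icc 0 l, η ≤ f s) (hε : 0 ≤ ε)
    (hosc : ∀ s ∈ Icc 0 l, ∀ s' ∈ Icc 0 l, dist s s' ≤ h → dist (f s) (f s') ≤ ε)
    {M : ℕ} {t : ℕ → ℝ} (ht : ∀ m ≤ M, t m ∈ Icc 0 l) (hstep : ∀ m < M, |t (m + 1) - t m| ≤ h) :
    |∫ s in t 0..t M, f s| - ε * (∫ s in 0..l, f s) / η ≤
      ∑ m ∈ Finset.range M, f (t m) * |t (m + 1) - t m| := by
  set S := ∑ m ∈ Finset.range M, f (t m) * |t (m + 1) - t m|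
  set L := ∑ m ∈ Finset.range M, |t (m + 1) - t m|
  set J := |∫ s in t 0..t M, f s|
  have hf0 : ∀ s ∈ Icc 0 l, 0 ≤ f s := fun s hs => hη.le.trans (hfη s hs)
  have hriemann := abs_sum_mul_sub_integral_le (fun m _ => hf.intervalIntegrable _ _)
    fun m hm => abs_apply_sub_le_of_mem_uIcc ordConnected_Icc hosc (ht m hm.le)
      (ht (m + 1) hm) (hstep m hm)
  have hsigned : |∑ m ∈ Finset.range M, f (t m) * (t (m + 1) - t m)| ≤ S := by
    refine (Finset.abs_sum_le_sum_abs _ _).trans_eq (Finset.sum_congr rfl fun m hm => ?_)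
    rw [abs_mul, abs_of_nonneg (hf0 _ (ht m (Finset.mem_range.1 hm).le))]
  have hJS : J - ε * L ≤ S := by
    have := abs_sub_abs_le_abs_sub (∫ s in t 0..t M, f s)
      (∑ m ∈ Finset.range M, f (t m) * (t (m + 1) - t m))
    rw [abs_sub_comm] at this
    linarith
  have hηL : η * L ≤ S := by
    rw [Finset.mul_sum]
    exact Finset.sum_le_sum fun m hm =>
      mul_le_mul_of_nonneg_right (hfη _ (ht m (Finset.mem_range.1 hm).le)) (abs_nonneg _)
  have hJI : J ≤ ∫ s in 0..l, f s :=
    abs_integral_le_integral_of_mem_Icc (hf.intervalIntegrable _ _) hf0 (ht 0 (Nat.zero_le _))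
      (ht M le_rfl)
  rcases le_or_gt J S with hJS' | hSJ
  · have : 0 ≤ ε * (∫ s in 0..l, f s) / η :=
      div_nonneg (mul_nonneg hε ((abs_nonneg _).trans hJI)) hη.le
    linarith
  · have hL : L ≤ (∫ s in 0..l, f s) / η := by
      rw [le_div_iff₀ hη]
      linarith
    have := mul_le_mul_of_nonneg_left hL hε
    rw [← mul_div_assoc] at this
    linarith

theorem min_sub_le_of_mem_edgeChainCosts (hf : Continuous f) (hη : 0 < η)
    (hfη : ∀ s ∈ Icc 0 l, η ≤ f s) (hε : 0 ≤ ε)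
    (hosc : ∀ s ∈ Icc 0 l, ∀ s' ∈ Icc 0 l, dist s s' ≤ h → dist (f s) (f s') ≤ ε) {r : ℝ}
    (hr : r ∈ edgeChainCosts l h f g0 gl x) :
    min (g0 + ∫ s in 0..x, f s) (gl + ∫ s in x..l, f s) - ε * (∫ s in 0..l, f s) / η ≤ r := by
  obtain ⟨M, t, rfl, ht, hstep, hend, rfl⟩ := hr
  have hf0 : ∀ s ∈ Icc 0 l, 0 ≤ f s := fun s hs => hη.le.trans (hfη s hs)
  have hx := ht 0 (Nat.zero_le _)
  have hl : l ∈ Icc 0 l := right_mem_Icc.2 (hx.1.trans hx.2)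
  have hcost := abs_integral_sub_div_le_sum_mul_abs hf hη hfη hε hosc ht hstep
  by_cases h0 : t M = 0
  · rw [h0, intervalIntegral.integral_symm, abs_neg, abs_of_nonneg
      (intervalIntegral_nonneg_of_mem_Icc hf0 (left_mem_Icc.2 hl.1) hx hx.1)] at hcost
    rw [if_pos h0]
    linarith [min_le_left (g0 + ∫ s in 0..t 0, f s) (gl + ∫ s in t 0..l, f s)]
  · rw [hend.resolve_left h0, abs_of_nonneg
      (intervalIntegral_nonneg_of_mem_Icc hf0 hx hl hx.2)] at hcost
    rw [if_neg h0]
    linarith [min_le_right (g0 + ∫ s in 0..t 0, f s) (gl + ∫ s in t 0..l, f s)]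

theorem exists_mem_edgeChainCosts_le (hl : 0 < l) (hf : Continuous f)
    (hf0 : ∀ s ∈ Icc 0 l, 0 ≤ f s) (hε : 0 ≤ ε)
    (hosc : ∀ s ∈ Icc 0 l, ∀ s' ∈ Icc 0 l, dist s s' ≤ h → dist (f s) (f s') ≤ ε) (hh : 0 < h)
    (hx : x ∈ Icc 0 l) :
    ∃ r ∈ edgeChainCosts l h f g0 gl x,
      r ≤ min (g0 + ∫ s in 0..x, f s) (gl + ∫ s in x..l, f s) + ε * l := by
  have h0 : (0 : ℝ) ∈ Icc 0 l := left_mem_Icc.2 hl.le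
  have hl' : l ∈ Icc 0 l := right_mem_Icc.2 hl.le
  rw [← min_add_add_right]
  rcases min_choice (g0 + (∫ s in 0..x, f s) + ε * l) (gl + (∫ s in x..l, f s) + ε * l)
    with hmin | hmin <;> rw [hmin]
  · obtain ⟨M, t, ht0, htM, ht, hstep, hcost⟩ :=
      exists_chain_sum_mul_abs_le ordConnected_Icc hf hf0 hosc hh hx h0
    refine ⟨_, ⟨M, t, ht0, ht, hstep, Or.inl htM, rfl⟩, ?_⟩
    rw [intervalIntegral.integral_symm, abs_neg,
      abs_of_nonneg (intervalIntegral_nonneg_of_mem_Icc hf0 h0 hx hx.1),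
      zero_sub, abs_neg, abs_of_nonneg hx.1] at hcost
    rw [if_pos htM]
    nlinarith [hx.2]
  · obtain ⟨M, t, ht0, htM, ht, hstep, hcost⟩ :=
      exists_chain_sum_mul_abs_le ordConnected_Icc hf hf0 hosc hh hx hl'
    refine ⟨_, ⟨M, t, ht0, ht, hstep, Or.inr htM, rfl⟩, ?_⟩
    rw [abs_of_nonneg (intervalIntegral_nonneg_of_mem_Icc hf0 hx hl' hx.2),
      abs_of_nonneg (sub_nonneg.2 hx.2)] at hcost
    rw [if_neg (htM.symm ▸ hl.ne')]
    nlinarith [hx.1]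

theorem abs_sInf_edgeChainCosts_sub_le (hl : 0 < l) (hf : Continuous f) (hη : 0 < η)
    (hfη : ∀ s ∈ Icc 0 l, η ≤ f s) (hε : 0 ≤ ε)
    (hosc : ∀ s ∈ Icc 0 l, ∀ s' ∈ Icc 0 l, dist s s' ≤ h → dist (f s) (f s') ≤ ε) (hh : 0 < h)
    (hx : x ∈ Icc 0 l) :
    |sInf (edgeChainCosts l h f g0 gl x) - min (g0 + ∫ s in 0..x, f s) (gl + ∫ s in x..l, f s)|
      ≤ ε * (l + (∫ s in 0..l, f s) / η) := by
  have hf0 : ∀ s ∈ Icc 0 l, 0 ≤ f s := fun s hs => hη.le.trans (hfη s hs)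
  have hlower (r : ℝ) := min_sub_le_of_mem_edgeChainCosts (g0 := g0) (gl := gl) (x := x) (r := r)
    hf hη hfη hε hosc
  obtain ⟨r, hr, hru⟩ := exists_mem_edgeChainCosts_le (g0 := g0) (gl := gl) hl hf hf0 hε hosc hh hx
  have hupper := (csInf_le ⟨_, hlower⟩ hr).trans hru
  have hinf := le_csInf ⟨r, hr⟩ hlower
  have : 0 ≤ ε * l := mul_nonneg hε hl.le
  have : 0 ≤ ε * (∫ s in 0..l, f s) / η :=
    div_nonneg (mul_nonneg hε (intervalIntegral.integral_nonneg hl.le hf0)) hη.le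
  rw [abs_sub_le_iff, mul_add, mul_div_assoc']
  constructor <;> linarith

end Edge

theorem edge_value_convergence_general (l η : ℝ) (hl : 0 < l)
    (f : ℝ → ℝ) (hf : Continuous f) (hη : 0 < η) (hfη : ∀ s ∈ Set.Icc 0 l, η ≤ f s)
    (g0 gl : ℝ) :
    TendstoUniformlyOn (fun h x => sInf (edgeChainCosts l h f g0 gl x))
      (fun x => min (g0 + ∫ s in (0 : ℝ)..x, f s) (gl + ∫ s in x..l, f s))
      (𝓝[>] 0) (Set.Icc 0 l) := by
  set C := l + (∫ s in (0 : ℝ)..l, f s) / η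
  have hC : 0 < C := add_pos_of_pos_of_nonneg hl <| div_nonneg
    (intervalIntegral.integral_nonneg hl.le fun s hs => hη.le.trans (hfη s hs)) hη.le
  rw [Metric.tendstoUniformlyOn_iff]
  intro ε hε
  obtain ⟨δ, hδ, hosc⟩ := Metric.uniformContinuousOn_iff_le.1
    (isCompact_Icc.uniformContinuousOn_of_continuous hf.continuousOn) (ε / (2 * C)) (by positivity)
  filter_upwards [Ioc_mem_nhdsGT hδ] with h ⟨hh, hhδ⟩ x hx
  rw [dist_comm, Real.dist_eq]
  calc _ ≤ ε / (2 * C) * C := abs_sInf_edgeChainCosts_sub_le hl hf hη hfη (by positivity)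
        (fun s hs s' hs' hss' => hosc s hs s' hs' (hss'.trans hhδ)) hh hx
    _ < ε := by field_simp; linarith

/-- Convergence of the single-edge semi-discrete scheme: under the compatibility
condition `|g0 - gl| ≤ ∫₀ˡ f`, the value functions `u_h` converge uniformly on `[0, l]`,
as `h → 0⁺`, to `u x = min (g0 + ∫₀ˣ f) (gl + ∫ₓˡ f)`. -/
theorem edge_value_convergence (l η : ℝ) (hl : 0 < l)
    (f : ℝ → ℝ) (hf : Continuous f) (hη : 0 < η) (hfη : ∀ s ∈ Set.Icc 0 l, η ≤ f s)
    (g0 gl : ℝ) (hcomp : |g0 - gl| ≤ ∫ s in (0 : ℝ)..l, f s) :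
    TendstoUniformlyOn (fun h x => sInf (edgeChainCosts l h f g0 gl x))
      (fun x => min (g0 + ∫ s in (0 : ℝ)..x, f s) (gl + ∫ s in x..l, f s))
      (𝓝[>] 0) (Set.Icc 0 l) :=
  edge_value_convergence_general l η hl f hf hη hfη g0 gl
end
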